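/- Let τ¹, τ² ∈ T_n be segmentations such that D_{τ¹} = D_{τ²} and (1/n) d∞^{(1)}(τ¹,τ²) < Λ̲_{τ¹}/2. Then d∞^{(1)}(τ¹,τ²) = d∞^{(1)}(τ²,τ¹) = d_H^{(1)}(τ¹,τ²). -/

import Mathlib

open MeasureTheory ProbabilityTheory

/-- A segmentation of `{1, …, n}` with `D` segments: integers
`0 = t 0 < t 1 < ⋯ < t D = n`. -/
structure Seg (n : ℕ) where
  D : ℕ
  t : ℕ → ℕ
  hD : 0 < D
  h0 : t 0 = 0
  hn : t D = n
  hmono : ∀ ℓ < D, t ℓ < t (ℓ + 1)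

namespace Seg

variable {n : ℕ}

/-- The `ℓ`-th segment (`0`-based) of a segmentation, as a set of `0`-based indices:
it corresponds to the paper's segment `λ_{ℓ+1} = {t ℓ + 1, …, t (ℓ+1)}` (1-based). -/
def seg (τ : Seg n) (ℓ : ℕ) : Finset (Fin n) :=
  Finset.univ.filter fun j => τ.t ℓ ≤ (j : ℕ) ∧ (j : ℕ) < τ.t (ℓ + 1)

/-- `Λ̲_τ`: normalized size of the smallest segment. -/
noncomputable def lamMin (τ : Seg n) : ℝ :=
  (((Finset.range τ.D).inf' (Finset.nonempty_range_iff.mpr τ.hD.ne')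
      fun ℓ => τ.t (ℓ + 1) - τ.t ℓ : ℕ) : ℝ) / n

/-- `Λ̄_τ`: normalized size of the largest segment. -/
noncomputable def lamMax (τ : Seg n) : ℝ :=
  (((Finset.range τ.D).sup' (Finset.nonempty_range_iff.mpr τ.hD.ne')
      fun ℓ => τ.t (ℓ + 1) - τ.t ℓ : ℕ) : ℝ) / n

/-- `d∞^{(1)}(τ¹,τ²) = max_{1 ≤ i ≤ D₁−1} min_{1 ≤ j ≤ D₂−1} |τ¹_i − τ²_j|`
(with natural conventions in the degenerate cases where a segmentation has no
interior change-point). -/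
noncomputable def dinf1 (τ1 τ2 : Seg n) : ℕ :=
  if h : 2 ≤ τ1.D ∧ 2 ≤ τ2.D then
    (Finset.Ioo 0 τ1.D).sup fun i =>
      (Finset.Ioo 0 τ2.D).inf' ⟨1, Finset.mem_Ioo.mpr ⟨Nat.one_pos, by omega⟩⟩
        fun j => Nat.dist (τ1.t i) (τ2.t j)
  else if τ1.D = τ2.D then 0 else n

/-- `d∞^{(2)}(τ¹,τ²) = max_{1 ≤ i ≤ D₁−1} min_{0 ≤ j ≤ D₂} |τ¹_i − τ²_j|`. -/
noncomputable def dinf2 (τ1 τ2 : Seg n) : ℕ :=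
  (Finset.Ioo 0 τ1.D).sup fun i =>
    (Finset.Icc 0 τ2.D).inf' ⟨0, Finset.mem_Icc.mpr ⟨le_rfl, Nat.zero_le _⟩⟩
      fun j => Nat.dist (τ1.t i) (τ2.t j)

/-- `d∞^{(3)}(τ¹,τ²) = max_{1 ≤ i ≤ D₁−1} |τ¹_i − τ²_i|` (meaningful when `D₁ = D₂`). -/
noncomputable def dinf3 (τ1 τ2 : Seg n) : ℕ :=
  (Finset.Ioo 0 τ1.D).sup fun i => Nat.dist (τ1.t i) (τ2.t i)

/-- `d_H^{(1)}`. -/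
noncomputable def dH1 (τ1 τ2 : Seg n) : ℕ := max (dinf1 τ1 τ2) (dinf1 τ2 τ1)

/-- `d_H^{(2)}`. -/
noncomputable def dH2 (τ1 τ2 : Seg n) : ℕ := max (dinf2 τ1 τ2) (dinf2 τ2 τ1)

/-- The matrix of the orthogonal projection `Π_τ`:
`(Π_τ)_{ij} = 1/|λ|` if `i, j` are in the same segment `λ` of `τ`, and `0` otherwise. -/
noncomputable def Pmat (τ : Seg n) : Fin n → Fin n → ℝ := fun i j =>
  ∑ ℓ ∈ Finset.range τ.D, if i ∈ τ.seg ℓ ∧ j ∈ τ.seg ℓ then ((τ.seg ℓ).card : ℝ)⁻¹ else 0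

/-- The Frobenius loss `d_F(τ¹,τ²) = ‖Π_{τ¹} − Π_{τ²}‖_F`. -/
noncomputable def dF (τ1 τ2 : Seg n) : ℝ :=
  Real.sqrt (∑ i, ∑ j, (Pmat τ1 i j - Pmat τ2 i j) ^ 2)

/-- The orthogonal projection `Π_τ : H^n → H^n` onto vectors constant on each segment
of `τ`: `(Π_τ x)_i` is the average of `x` over the segment of `τ` containing `i`. -/
noncomputable def proj {H : Type*} [AddCommGroup H] [Module ℝ H]
    (τ : Seg n) (x : Fin n → H) : Fin n → H := fun i =>
  ∑ ℓ ∈ Finset.range τ.D,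
    if τ.t ℓ ≤ (i : ℕ) ∧ (i : ℕ) < τ.t (ℓ + 1)
    then (((τ.t (ℓ + 1) - τ.t ℓ : ℕ) : ℝ))⁻¹ • ∑ j ∈ τ.seg ℓ, x j
    else 0

end Seg

/-- Squared norm on `H^n`: `‖x‖² = Σ_i ‖x_i‖²`. -/
noncomputable def hnorm2 {n : ℕ} {H : Type*} [NormedAddCommGroup H] (x : Fin n → H) : ℝ :=
  ∑ i, ‖x i‖ ^ 2

/-- Inner product on `H^n`: `⟨x, y⟩ = Σ_i ⟨x_i, y_i⟩_H`. -/
noncomputable def hinner {n : ℕ} {H : Type*} [NormedAddCommGroup H] [InnerProductSpace ℝ H]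
    (x y : Fin n → H) : ℝ := ∑ i, inner ℝ (x i) (y i)

/-- `τ` is the true segmentation of `m ∈ H^n`: `m` is constant on every segment of `τ`
and jumps at every interior change-point of `τ`. -/
def IsTrueSeg {n : ℕ} {H : Type*} (τ : Seg n) (m : Fin n → H) : Prop :=
  (∀ ℓ < τ.D, ∀ i ∈ τ.seg ℓ, ∀ j ∈ τ.seg ℓ, m i = m j) ∧
  ∀ ℓ, 0 < ℓ → ℓ < τ.D → ∀ (h1 : τ.t ℓ - 1 < n) (h2 : τ.t ℓ < n),
    m ⟨τ.t ℓ - 1, h1⟩ ≠ m ⟨τ.t ℓ, h2⟩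

/-- The size `‖μ*_{t ℓ + 1} − μ*_{t ℓ}‖` (paper indexing) of the jump of `m` at
the change-point `t ℓ` of `τ`. -/
noncomputable def jumpAt {n : ℕ} {H : Type*} [NormedAddCommGroup H]
    (τ : Seg n) (m : Fin n → H) (ℓ : ℕ) : ℝ :=
  if h : 0 < τ.t ℓ ∧ τ.t ℓ < n then ‖m ⟨τ.t ℓ, h.2⟩ - m ⟨τ.t ℓ - 1, by omega⟩‖ else 0

/-- `Δ̲`: size of the smallest jump of `m` (over the change-points of `τ`). -/
noncomputable def deltaMin {n : ℕ} {H : Type*} [NormedAddCommGroup H]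
    (τ : Seg n) (m : Fin n → H) : ℝ :=
  if h : 2 ≤ τ.D then
    (Finset.Ioo 0 τ.D).inf' ⟨1, Finset.mem_Ioo.mpr ⟨Nat.one_pos, by omega⟩⟩ (jumpAt τ m)
  else 0

/-- `Δ̄`: size of the largest jump of `m` (over the change-points of `τ`). -/
noncomputable def deltaMax {n : ℕ} {H : Type*} [NormedAddCommGroup H]
    (τ : Seg n) (m : Fin n → H) : ℝ :=
  if h : 2 ≤ τ.D then
    (Finset.Ioo 0 τ.D).sup' ⟨1, Finset.mem_Ioo.mpr ⟨Nat.one_pos, by omega⟩⟩ (jumpAt τ m)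
  else 0

/-- The value of `m` at the first index of the `ℓ`-th segment of `τ`; if `m` is constant
on each segment of `τ`, this is the common value `μ*_{λ_ℓ}` of `m` on that segment. -/
noncomputable def segVal {n : ℕ} {H : Type*} [AddCommGroup H]
    (τ : Seg n) (m : Fin n → H) (ℓ : ℕ) : H :=
  if h : τ.t ℓ < n then m ⟨τ.t ℓ, h⟩ else 0

/-- `M_n = max_{1 ≤ k ≤ n} ‖ε_1 + ⋯ + ε_k‖` (the value at `k = 0` is `0`, which does not
affect the maximum). -/
noncomputable def Mmax {n : ℕ} {H : Type*} [NormedAddCommGroup H] (ε : Fin n → H) : ℝ :=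
  (Finset.range (n + 1)).sup' (Finset.nonempty_range_iff.mpr (Nat.succ_ne_zero n))
    fun k => ‖∑ j ∈ Finset.univ.filter (fun j : Fin n => (j : ℕ) < k), ε j‖

/-!
Write `d = d∞^{(1)}(τ¹,τ²)`. The change-points of `τ¹` are at least `n Λ̲_{τ¹} > 2d` apart, so
any choice of a change-point of `τ²` within `d` of each change-point of `τ¹` is strictly
increasing; as both segmentations have the same number of change-points, it is the identity,
i.e. `|τ¹_i − τ²_i| ≤ d` for every `i`. This gives `d∞^{(1)}(τ²,τ¹) ≤ d`. Conversely, if `i₀`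
realises `d`, every change-point `τ¹_i` with `i ≠ i₀` is more than `2d` from `τ¹_{i₀}`, hence
more than `d` from `τ²_{i₀}`, so `d∞^{(1)}(τ²,τ¹) ≥ d`.
-/

theorem StrictMonoOn.eqOn_id_of_mapsTo {α : Type*} [LinearOrder α] {s : Set α} (hs : s.Finite)
    {f : α → α} (hf : StrictMonoOn f s) (hmaps : Set.MapsTo f s s) : Set.EqOn f id s := by
  have : Finite s := hs
  intro x hx
  have hrestrict : StrictMono (hmaps.restrict f s s) := fun a b hab => hf a.2 b.2 hab
  exact congrArg Subtype.val (hrestrict.apply_eq (x := ⟨x, hx⟩))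

namespace Seg

variable {n : ℕ}

/-- `n Λ̲_τ`, the length of the shortest segment. -/
def minLen (τ : Seg n) : ℕ :=
  (Finset.range τ.D).inf' (Finset.nonempty_range_iff.mpr τ.hD.ne') fun ℓ => τ.t (ℓ + 1) - τ.t ℓ

theorem strictMonoOn_t (τ : Seg n) : StrictMonoOn τ.t (Set.Iic τ.D) :=
  strictMonoOn_Iic_of_lt_succ τ.hmono

theorem t_add_minLen_le (τ : Seg n) {a b : ℕ} (hab : a < b) (hb : b ≤ τ.D) :
    τ.t a + τ.minLen ≤ τ.t b := by
  have hlen : τ.minLen ≤ τ.t (a + 1) - τ.t a := Finset.inf'_le _ (Finset.mem_range.mpr (by omega))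
  have hstep : τ.t a < τ.t (a + 1) := τ.hmono a (by omega)
  have hmono : τ.t (a + 1) ≤ τ.t b :=
    τ.strictMonoOn_t.monotoneOn (Set.mem_Iic.mpr (by omega)) (Set.mem_Iic.mpr hb) hab
  omega

theorem minLen_le_dist_t (τ : Seg n) {a b : ℕ} (hab : a ≠ b) (ha : a ≤ τ.D) (hb : b ≤ τ.D) :
    τ.minLen ≤ Nat.dist (τ.t a) (τ.t b) := by
  rcases hab.lt_or_gt with h | h
  · have := τ.t_add_minLen_le h hb
    unfold Nat.dist; omega
  · have := τ.t_add_minLen_le h ha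
    unfold Nat.dist; omega

theorem two_mul_lt_minLen {τ : Seg n} {c : ℕ} (h : (c : ℝ) / n < τ.lamMin / 2) :
    2 * c < τ.minLen := by
  change (c : ℝ) / n < (τ.minLen : ℝ) / n / 2 at h
  rcases Nat.eq_zero_or_pos n with rfl | hn
  · simp at h
  rw [div_div, div_lt_div_iff₀ (by positivity) (by positivity)] at h
  have : (2 * c : ℝ) < τ.minLen := by nlinarith [(Nat.cast_pos.mpr hn : (0 : ℝ) < n)]
  exact_mod_cast this

theorem dinf1_eq_zero_of_lt_two {τ1 τ2 : Seg n} (hD : τ1.D = τ2.D) (h : τ1.D < 2) :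
    dinf1 τ1 τ2 = 0 := by
  rw [dinf1, dif_neg (by omega), if_pos hD]

theorem dinf1_le_iff {τ1 τ2 : Seg n} (h1 : 2 ≤ τ1.D) (h2 : 2 ≤ τ2.D) {c : ℕ} : dinf1 τ1 τ2 ≤ c ↔
    ∀ i ∈ Finset.Ioo 0 τ1.D, ∃ j ∈ Finset.Ioo 0 τ2.D, Nat.dist (τ1.t i) (τ2.t j) ≤ c := by
  rw [dinf1, dif_pos ⟨h1, h2⟩, Finset.sup_le_iff]
  exact forall₂_congr fun i _ => Finset.inf'_le_iff _

theorem le_dinf1_iff {τ1 τ2 : Seg n} (h1 : 2 ≤ τ1.D) (h2 : 2 ≤ τ2.D) {c : ℕ} : c ≤ dinf1 τ1 τ2 ↔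
    ∃ i ∈ Finset.Ioo 0 τ1.D, ∀ j ∈ Finset.Ioo 0 τ2.D, c ≤ Nat.dist (τ1.t i) (τ2.t j) := by
  rw [dinf1, dif_pos ⟨h1, h2⟩]
  obtain ⟨i₀, hi₀, hsup⟩ := Finset.exists_mem_eq_sup (Finset.Ioo 0 τ1.D)
    ⟨1, Finset.mem_Ioo.mpr ⟨Nat.one_pos, by omega⟩⟩ fun i =>
      (Finset.Ioo 0 τ2.D).inf' ⟨1, Finset.mem_Ioo.mpr ⟨Nat.one_pos, by omega⟩⟩
        fun j => Nat.dist (τ1.t i) (τ2.t j)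
  rw [hsup]
  constructor
  · exact fun hc => ⟨i₀, hi₀, (Finset.le_inf'_iff _ _).mp hc⟩
  · rintro ⟨i, hi, hc⟩
    exact ((Finset.le_inf'_iff _ _).mpr hc).trans (hsup ▸ Finset.le_sup (f := fun i =>
      (Finset.Ioo 0 τ2.D).inf' _ fun j => Nat.dist (τ1.t i) (τ2.t j)) hi)

theorem dist_t_le_of_forall_exists_dist_le {τ1 τ2 : Seg n} (hD : τ1.D = τ2.D) {c : ℕ}
    (hc : 2 * c < τ1.minLen)
    (hnear : ∀ i ∈ Finset.Ioo 0 τ1.D, ∃ j ∈ Finset.Ioo 0 τ2.D, Nat.dist (τ1.t i) (τ2.t j) ≤ c) :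
    ∀ i ∈ Finset.Ioo 0 τ1.D, Nat.dist (τ1.t i) (τ2.t i) ≤ c := by
  rw [← hD] at hnear
  choose! F hF using hnear
  have hmono : StrictMonoOn F (Set.Ioo 0 τ1.D) := by
    intro i hi i' hi' hlt
    by_contra! hle
    have hi := Finset.mem_Ioo.mpr hi
    have hi' := Finset.mem_Ioo.mpr hi'
    have hFi := Finset.mem_Ioo.mp (hF i hi).1
    have hτ2 : τ2.t (F i') ≤ τ2.t (F i) :=
      τ2.strictMonoOn_t.monotoneOn (Set.mem_Iic.mpr (by omega)) (Set.mem_Iic.mpr (by omega)) hle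
    have hgap := τ1.t_add_minLen_le hlt (Finset.mem_Ioo.mp hi').2.le
    have hdi := (hF i hi).2
    have hdi' := (hF i' hi').2
    unfold Nat.dist at hdi hdi'
    omega
  have hid : Set.EqOn F id (Set.Ioo 0 τ1.D) :=
    hmono.eqOn_id_of_mapsTo (Set.finite_Ioo _ _) fun i hi => by
      simpa using (hF i (Finset.mem_Ioo.mpr hi)).1
  intro i hi
  simpa [hid (Finset.mem_Ioo.mp hi)] using (hF i hi).2

theorem dinf1_le_dinf1_swap {τ1 τ2 : Seg n} (hD : τ1.D = τ2.D) (h1 : 2 ≤ τ1.D)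
    (hc : 2 * dinf1 τ1 τ2 < τ1.minLen)
    (hdiag : ∀ i ∈ Finset.Ioo 0 τ1.D, Nat.dist (τ1.t i) (τ2.t i) ≤ dinf1 τ1 τ2) :
    dinf1 τ1 τ2 ≤ dinf1 τ2 τ1 := by
  have h2 : 2 ≤ τ2.D := hD ▸ h1
  obtain ⟨i₀, hi₀, hfar⟩ := (le_dinf1_iff h1 h2).mp le_rfl
  refine (le_dinf1_iff h2 h1).mpr ⟨i₀, hD ▸ hi₀, fun i hi => ?_⟩
  rcases eq_or_ne i i₀ with rfl | hne
  · exact Nat.dist_comm (τ1.t i) _ ▸ hfar i (hD ▸ hi)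
  · have hsep := τ1.minLen_le_dist_t hne (Finset.mem_Ioo.mp hi).2.le
      (Finset.mem_Ioo.mp hi₀).2.le
    have hclose := hdiag i₀ hi₀
    unfold Nat.dist at hsep hclose ⊢
    omega

end Seg

/-- Lemma 3.2 (ii): if `D_{τ¹} = D_{τ²}` and `(1/n) d∞^{(1)}(τ¹,τ²) < Λ̲_{τ¹}/2`, then
`d∞^{(1)}(τ¹,τ²) = d∞^{(1)}(τ²,τ¹) = d_H^{(1)}(τ¹,τ²)`. -/
theorem dinf1_symm_of_close {n : ℕ} (τ1 τ2 : Seg n) (hD : τ1.D = τ2.D)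
    (h : (Seg.dinf1 τ1 τ2 : ℝ) / n < Seg.lamMin τ1 / 2) :
    Seg.dinf1 τ1 τ2 = Seg.dinf1 τ2 τ1 ∧ Seg.dinf1 τ1 τ2 = Seg.dH1 τ1 τ2 := by
  rcases lt_or_ge τ1.D 2 with hlt | h1
  · have h₁₂ := Seg.dinf1_eq_zero_of_lt_two hD hlt
    have h₂₁ := Seg.dinf1_eq_zero_of_lt_two hD.symm (hD ▸ hlt)
    simp [Seg.dH1, h₁₂, h₂₁]
  have h2 : 2 ≤ τ2.D := hD ▸ h1
  have hc := Seg.two_mul_lt_minLen h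
  have hdiag := Seg.dist_t_le_of_forall_exists_dist_le hD hc ((Seg.dinf1_le_iff h1 h2).mp le_rfl)
  have hle : Seg.dinf1 τ2 τ1 ≤ Seg.dinf1 τ1 τ2 := (Seg.dinf1_le_iff h2 h1).mpr fun i hi =>
    ⟨i, hD ▸ hi, Nat.dist_comm (τ1.t i) _ ▸ hdiag i (hD ▸ hi)⟩
  have heq := le_antisymm (Seg.dinf1_le_dinf1_swap hD h1 hc hdiag) hle
  exact ⟨heq, by rw [Seg.dH1, ← heq, max_self]⟩
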